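/- Control of the relative flux by the relative entropy (Lemma A.1, second bound): Let hypotheses (H1), (H2), (H3) and the growth assumptions (A1), (A2), (A3) be satisfied. Then there exists a constant C₃ depending on M such that for each α = 1,…,d one has |F_α(u|ū)| ≤ C₃ η(u|ū) for all u ∈ ℝ^n and all ū ∈ B_M = {u ∈ ℝ^n : |u| ≤ M}, where F_α(u|ū) = F_α(u) − F_α(ū) − ∇F_α(ū) ∇A(ū)⁻¹ (A(u) − A(ū)). -/

import Mathlib

/-!
Put `H = η ∘ A⁻¹`. By (H2) the gradient of `H` is `G ∘ A⁻¹`, so `η(u|ū)` is the Bregman divergence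
of `H` between `A ū` and `A u`; differentiating (H2) once more, (H3) says that the derivative of
`G ∘ A⁻¹` is positive definite, hence uniformly coercive on compact sets. Together with the local Lipschitz bound for
`A⁻¹` this gives `η(u|ū) ≥ κ |u - ū|²` on compact sets, while `|F(u|ū)| ≤ C |u - ū|²` there by
Taylor's formula. For large `|u|` the growth conditions give `η(u|ū) ≥ η(u) / 2` and
`|F(u|ū)| ≤ C η(u)`, uniformly in `ū ∈ B_M`.
-/

open scoped RealInnerProductSpace
open Set Filter Function Bornology Asymptotics

noncomputable section

theorem IsCompact.exists_pos_forall_norm_le {X E' : Type*} [TopologicalSpace X]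
    [SeminormedAddCommGroup E'] {f : X → E'} {K : Set X} (hK : IsCompact K)
    (hf : ContinuousOn f K) : ∃ C > 0, ∀ x ∈ K, ‖f x‖ ≤ C := by
  obtain ⟨C, hC, h⟩ := (hK.image_of_continuousOn hf).isBounded.exists_pos_norm_le
  exact ⟨C, hC, fun x hx => h _ (mem_image_of_mem f hx)⟩

theorem isLittleO_cobounded_of_forall_exists_norm_le {E E' : Type*} [NormedAddCommGroup E]
    [NormedAddCommGroup E'] {f : E → E'} {g : E → ℝ}
    (h : ∀ ε > 0, ∃ R, ∀ w, R ≤ ‖w‖ → ‖f w‖ ≤ ε * g w) : f =o[cobounded E] g :=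
  IsLittleO.of_bound fun ε hε => by
    obtain ⟨R, hR⟩ := h ε hε
    filter_upwards [eventually_cobounded_le_norm R] with w hw
    exact (hR w hw).trans (mul_le_mul_of_nonneg_left (Real.le_norm_self _) hε.le)

section Normed

variable {E E' : Type*} [NormedAddCommGroup E] [NormedSpace ℝ E]
  [NormedAddCommGroup E'] [NormedSpace ℝ E']

theorem IsUnit.ringInverse_apply_apply {f : E →L[ℝ] E} (hf : IsUnit f) (v : E) :
    Ring.inverse f (f v) = v := by
  rw [← mul_apply_eq_comp, Ring.inverse_mul_cancel f hf, one_apply_eq_self]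

theorem IsUnit.apply_ringInverse_apply {f : E →L[ℝ] E} (hf : IsUnit f) (v : E) :
    f (Ring.inverse f v) = v := by
  rw [← mul_apply_eq_comp, Ring.mul_inverse_cancel f hf, one_apply_eq_self]

theorem hasFDerivAt_fderiv_apply {f : E → E'} (hf : ContDiff ℝ 2 f) (x ξ : E) :
    HasFDerivAt (fun y => fderiv ℝ f y ξ)
      ((ContinuousLinearMap.apply ℝ E' ξ).comp (fderiv ℝ (fderiv ℝ f) x)) x :=
  (ContinuousLinearMap.apply ℝ E' ξ).hasFDerivAt.comp x
    ((hf.fderiv_right (m := 1) le_rfl).differentiable one_ne_zero x).hasFDerivAt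

theorem norm_sub_sub_fderiv_le_mul_sq {f : E → E'} (hf : ContDiff ℝ 2 f) {s : Set E} {C : ℝ}
    (hs : Convex ℝ s) (hC : ∀ z ∈ s, ‖fderiv ℝ (fderiv ℝ f) z‖ ≤ C) {x y : E} (hx : x ∈ s)
    (hy : y ∈ s) : ‖f y - f x - fderiv ℝ f x (y - x)‖ ≤ C * ‖y - x‖ ^ 2 := by
  have hC₀ : 0 ≤ C := (norm_nonneg (fderiv ℝ (fderiv ℝ f) x)).trans (hC x hx)
  have hf' : Differentiable ℝ (fderiv ℝ f) :=
    (hf.fderiv_right (m := 1) le_rfl).differentiable one_ne_zero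
  have hlip : ∀ z ∈ s, ‖fderiv ℝ f z - fderiv ℝ f x‖ ≤ C * ‖z - x‖ := fun z hz =>
    hs.norm_image_sub_le_of_norm_fderiv_le (fun w _ => hf' w) hC hx hz
  have hlip' : ∀ z ∈ s ∩ Metric.closedBall x ‖y - x‖,
      ‖fderiv ℝ f z - fderiv ℝ f x‖ ≤ C * ‖y - x‖ := fun z hz =>
    (hlip z hz.1).trans (mul_le_mul_of_nonneg_left (mem_closedBall_iff_norm.1 hz.2) hC₀)
  have := (hs.inter (convex_closedBall x ‖y - x‖)).norm_image_sub_le_of_norm_fderiv_le'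
    (fun z _ => hf.differentiable two_ne_zero z) hlip'
    ⟨hx, Metric.mem_closedBall_self (norm_nonneg _)⟩ ⟨hy, mem_closedBall_iff_norm.2 le_rfl⟩
  linarith

def relFlux (A : E → E) (F : E → E') (u ubar : E) : E' :=
  F u - F ubar - fderiv ℝ F ubar (Ring.inverse (fderiv ℝ A ubar) (A u - A ubar))

theorem norm_relFlux_le (A : E → E) (F : E → E') (u ubar : E) :
    ‖relFlux A F u ubar‖ ≤ ‖F u‖ + ‖F ubar‖ +
      ‖(fderiv ℝ F ubar).comp (Ring.inverse (fderiv ℝ A ubar))‖ * (‖A u‖ + ‖A ubar‖) :=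
  calc ‖relFlux A F u ubar‖
      ≤ ‖F u‖ + ‖F ubar‖ +
        ‖((fderiv ℝ F ubar).comp (Ring.inverse (fderiv ℝ A ubar))) (A u - A ubar)‖ :=
        (norm_sub_le _ _).trans (by gcongr; exacts [norm_sub_le _ _, le_rfl])
    _ ≤ _ := by
        gcongr
        exact (ContinuousLinearMap.le_opNorm _ _).trans (by gcongr; exact norm_sub_le _ _)

variable {A : E → E} {F : E → E'}

theorem relFlux_eq_sub_of_isUnit {u ubar : E} (h : IsUnit (fderiv ℝ A ubar)) :
    relFlux A F u ubar = (F u - F ubar - fderiv ℝ F ubar (u - ubar)) -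
      ((fderiv ℝ F ubar).comp (Ring.inverse (fderiv ℝ A ubar)))
        (A u - A ubar - fderiv ℝ A ubar (u - ubar)) := by
  simp only [relFlux, ContinuousLinearMap.comp_apply, map_sub, h.ringInverse_apply_apply]
  abel

variable [CompleteSpace E]

theorem hasFDerivAt_invFun (hA : ContDiff ℝ 1 A) (hAbij : Bijective A)
    (hA' : ∀ x, IsUnit (fderiv ℝ A x)) (y : E) :
    HasFDerivAt (invFun A) (Ring.inverse (fderiv ℝ A (invFun A y))) y := by
  obtain ⟨u, hu⟩ := hA' (invFun A y)
  have hu' : (ContinuousLinearEquiv.ofUnit u : E →L[ℝ] E) = fderiv ℝ A (invFun A y) := hu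
  have := (hu' ▸ hA.contDiffAt.hasStrictFDerivAt one_ne_zero).to_local_left_inverse
    (Eventually.of_forall (leftInverse_invFun hAbij.1))
  rw [rightInverse_invFun hAbij.2 y] at this
  rw [← hu, Ring.inverse_unit]
  exact this.hasFDerivAt

theorem continuous_ringInverse_fderiv (hA : ContDiff ℝ 1 A)
    (hA' : ∀ x, IsUnit (fderiv ℝ A x)) : Continuous fun x => Ring.inverse (fderiv ℝ A x) :=
  continuous_iff_continuousAt.2 fun x =>
    ((hA' x).unit_spec ▸ NormedRing.inverse_continuousAt (hA' x).unit).comp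
      (hA.continuous_fderiv one_ne_zero).continuousAt

theorem exists_norm_sub_le_mul_norm_sub_of_bijective [FiniteDimensional ℝ E]
    (hA : ContDiff ℝ 1 A) (hAbij : Bijective A) (hA' : ∀ x, IsUnit (fderiv ℝ A x))
    {K : Set E} (hK : IsCompact K) :
    ∃ ℓ > 0, ∀ u ∈ K, ∀ ubar ∈ K, ‖u - ubar‖ ≤ ℓ * ‖A u - A ubar‖ := by
  have hg := hasFDerivAt_invFun hA hAbij hA'
  have hgc : Continuous (invFun A) := continuous_iff_continuousAt.2 fun y => (hg y).continuousAt
  obtain ⟨ρ, hρ⟩ := (hK.image hA.continuous).isBounded.subset_closedBall 0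
  obtain ⟨ℓ, hℓ, hbound⟩ := (isCompact_closedBall (0 : E) ρ).exists_pos_forall_norm_le
    ((continuous_ringInverse_fderiv hA hA').comp hgc).continuousOn
  refine ⟨ℓ, hℓ, fun u hu ubar hubar => ?_⟩
  have := (convex_closedBall (0 : E) ρ).norm_image_sub_le_of_norm_hasFDerivWithin_le
    (fun y _ => (hg y).hasFDerivWithinAt) hbound (hρ (mem_image_of_mem A hubar))
    (hρ (mem_image_of_mem A hu))
  rwa [leftInverse_invFun hAbij.1 u, leftInverse_invFun hAbij.1 ubar] at this

theorem exists_norm_relFlux_le_mul_sq (hA : ContDiff ℝ 2 A) (hF : ContDiff ℝ 2 F)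
    (hA' : ∀ x, IsUnit (fderiv ℝ A x)) {K : Set E} (hK : IsCompact K) (hKc : Convex ℝ K) :
    ∃ C > 0, ∀ u ∈ K, ∀ ubar ∈ K, ‖relFlux A F u ubar‖ ≤ C * ‖u - ubar‖ ^ 2 := by
  obtain ⟨CF, hCF, hF₂⟩ := hK.exists_pos_forall_norm_le
    ((hF.fderiv_right (m := 1) le_rfl).continuous_fderiv one_ne_zero).continuousOn
  obtain ⟨CA, hCA, hA₂⟩ := hK.exists_pos_forall_norm_le
    ((hA.fderiv_right (m := 1) le_rfl).continuous_fderiv one_ne_zero).continuousOn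
  obtain ⟨CL, hCL, hL⟩ := hK.exists_pos_forall_norm_le
    ((hF.continuous_fderiv two_ne_zero).clm_comp
      (continuous_ringInverse_fderiv (hA.of_le one_le_two) hA')).continuousOn
  refine ⟨CF + CL * CA, by positivity, fun u hu ubar hubar => ?_⟩
  have hFu := norm_sub_sub_fderiv_le_mul_sq hF hKc hF₂ hubar hu
  have hAu := norm_sub_sub_fderiv_le_mul_sq hA hKc hA₂ hubar hu
  rw [relFlux_eq_sub_of_isUnit (hA' ubar)]
  calc _ ≤ CF * ‖u - ubar‖ ^ 2 + CL * (CA * ‖u - ubar‖ ^ 2) :=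
        (norm_sub_le _ _).trans (add_le_add hFu ((ContinuousLinearMap.le_opNorm _ _).trans
          (mul_le_mul (hL ubar hubar) hAu (norm_nonneg _) hCL.le)))
    _ = (CF + CL * CA) * ‖u - ubar‖ ^ 2 := by ring

theorem exists_pos_eventually_norm_relFlux_le_mul {η : E → ℝ} (hA : ContDiff ℝ 1 A)
    (hA' : ∀ x, IsUnit (fderiv ℝ A x)) (hF : ContDiff ℝ 1 F)
    (hηtop : Tendsto η (cobounded E) atTop) (hFη : F =O[cobounded E] η)
    (hAη : A =O[cobounded E] η) {K : Set E} (hK : IsCompact K) :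
    ∃ C > 0, ∀ᶠ u in cobounded E, ∀ ubar ∈ K, ‖relFlux A F u ubar‖ ≤ C * η u := by
  obtain ⟨bF, hbF, hFK⟩ := hK.exists_pos_forall_norm_le hF.continuous.continuousOn
  obtain ⟨bA, hbA, hAK⟩ := hK.exists_pos_forall_norm_le hA.continuous.continuousOn
  obtain ⟨bL, hbL, hLK⟩ := hK.exists_pos_forall_norm_le
    ((hF.continuous_fderiv one_ne_zero).clm_comp
      (continuous_ringInverse_fderiv hA hA')).continuousOn
  obtain ⟨cF, hcF, hFη'⟩ := hFη.exists_pos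
  obtain ⟨cA, hcA, hAη'⟩ := hAη.exists_pos
  refine ⟨cF + bL * cA + 1, by positivity, ?_⟩
  filter_upwards [hFη'.bound, hAη'.bound, hηtop.eventually_ge_atTop (bF + bL * bA)]
    with u hFu hAu hηu ubar hubar
  rw [Real.norm_of_nonneg ((by positivity : (0 : ℝ) ≤ bF + bL * bA).trans hηu)] at hFu hAu
  have hLA : ‖(fderiv ℝ F ubar).comp (Ring.inverse (fderiv ℝ A ubar))‖ * (‖A u‖ + ‖A ubar‖) ≤
      bL * (cA * η u + bA) := by
    gcongr
    exacts [hLK ubar hubar, hAK ubar hubar]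
  linarith [norm_relFlux_le A F u ubar, hFK ubar hubar]

end Normed

section InnerProduct

variable {E : Type*} [NormedAddCommGroup E] [InnerProductSpace ℝ E]

theorem mul_sq_norm_sub_le_inner_sub_of_hasFDerivAt {Γ : E → E} {Γ' : E → E →L[ℝ] E}
    {S : Set E} {c : ℝ} (hS : Convex ℝ S) (hΓ : ∀ x, HasFDerivAt Γ (Γ' x) x)
    (hcoer : ∀ x ∈ S, ∀ w, c * ‖w‖ ^ 2 ≤ ⟪Γ' x w, w⟫) {V W : E} (hV : V ∈ S) (hW : W ∈ S) :
    c * ‖V - W‖ ^ 2 ≤ ⟪Γ V - Γ W, V - W⟫ := by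
  set v := V - W
  have hpath : ∀ t : ℝ, HasDerivAt (fun t : ℝ => W + t • v) v t := fun t => by
    simpa using ((hasDerivAt_id t).smul_const v).const_add W
  have hψ : ∀ t : ℝ, HasDerivAt (fun t => ⟪Γ (W + t • v), v⟫ - c * t * ‖v‖ ^ 2)
      (⟪Γ' (W + t • v) v, v⟫ - c * ‖v‖ ^ 2) t := fun t => by
    have h := ((hΓ _).comp_hasDerivAt t (hpath t)).inner ℝ (hasDerivAt_const t v)
    exact (h.fun_sub (((hasDerivAt_id t).const_mul c).mul_const (‖v‖ ^ 2))).congr_deriv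
      (by simp)
  obtain ⟨θ, hθ, hslope⟩ := exists_hasDerivAt_eq_slope _ _ zero_lt_one
    (fun t _ => (hψ t).continuousAt.continuousWithinAt) (fun t _ => hψ t)
  have := hcoer _ (hS.add_smul_sub_mem hW hV (Ioo_subset_Icc_self hθ)) v
  simp only [zero_smul, add_zero, one_smul, v, add_sub_cancel] at hslope
  rw [inner_sub_left]
  linarith

theorem half_mul_sq_norm_sub_le_bregman [CompleteSpace E] {H : E → ℝ} {Γ : E → E} {S : Set E}
    {c : ℝ} (hS : Convex ℝ S) (hH : ∀ x, HasGradientAt H (Γ x) x)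
    (hΓ : ∀ V ∈ S, ∀ W ∈ S, c * ‖V - W‖ ^ 2 ≤ ⟪Γ V - Γ W, V - W⟫) {V W : E}
    (hV : V ∈ S) (hW : W ∈ S) :
    c / 2 * ‖V - W‖ ^ 2 ≤ H V - H W - ⟪Γ W, V - W⟫ := by
  set v := V - W
  have hpath : ∀ t : ℝ, HasDerivAt (fun t : ℝ => W + t • v) v t := fun t => by
    simpa using ((hasDerivAt_id t).smul_const v).const_add W
  have hφ : ∀ t : ℝ, HasDerivAt (fun t => H (W + t • v) - t * ⟪Γ W, v⟫ - c / 2 * t ^ 2 * ‖v‖ ^ 2)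
      (⟪Γ (W + t • v) - Γ W, v⟫ - c * t * ‖v‖ ^ 2) t := fun t => by
    have h := (hH _).hasFDerivAt.comp_hasDerivAt t (hpath t)
    have := (h.fun_sub ((hasDerivAt_id t).mul_const ⟪Γ W, v⟫)).fun_sub
      (((hasDerivAt_pow 2 t).const_mul (c / 2)).mul_const (‖v‖ ^ 2))
    exact this.congr_deriv (by
      simp only [InnerProductSpace.toDual_apply_apply, inner_sub_left]; push_cast; ring)
  obtain ⟨θ, hθ, hslope⟩ := exists_hasDerivAt_eq_slope _ _ zero_lt_one
    (fun t _ => (hφ t).continuousAt.continuousWithinAt) (fun t _ => hφ t)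
  have hmono := hΓ _ (hS.add_smul_sub_mem hW hV (Ioo_subset_Icc_self hθ)) W hW
  rw [add_sub_cancel_left, norm_smul, inner_smul_right, Real.norm_of_nonneg hθ.1.le] at hmono
  have : c * θ * ‖v‖ ^ 2 ≤ ⟪Γ (W + θ • v) - Γ W, v⟫ :=
    le_of_mul_le_mul_left (by linarith) hθ.1
  simp only [zero_smul, add_zero, one_smul, v, add_sub_cancel] at hslope
  nlinarith

theorem IsCompact.exists_pos_mul_sq_norm_le_inner [FiniteDimensional ℝ E]
    {L : E → E →L[ℝ] E} {X : Set E} (hX : IsCompact X) (hL : ContinuousOn L X)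
    (hpos : ∀ x ∈ X, ∀ w ≠ 0, 0 < ⟪L x w, w⟫) :
    ∃ c > 0, ∀ x ∈ X, ∀ w, c * ‖w‖ ^ 2 ≤ ⟪L x w, w⟫ := by
  obtain ⟨c, hc, hmin⟩ := (hX.prod (isCompact_sphere (0 : E) 1)).exists_forall_le'
    (((hL.comp continuousOn_fst fun z hz => hz.1).clm_apply continuousOn_snd).inner
      continuousOn_snd)
    fun z hz => hpos _ hz.1 _ (ne_zero_of_mem_unit_sphere ⟨z.2, hz.2⟩)
  refine ⟨c, hc, fun x hx w => ?_⟩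
  rcases eq_or_ne w 0 with rfl | hw
  · simp
  have := hmin (x, ‖w‖⁻¹ • w) ⟨hx, by simp [norm_smul, hw]⟩
  simp only [comp_apply, map_smul, inner_smul_left, inner_smul_right, RCLike.conj_to_real,
    ← mul_assoc] at this
  calc c * ‖w‖ ^ 2 ≤ ‖w‖⁻¹ * ‖w‖⁻¹ * ⟪L x w, w⟫ * ‖w‖ ^ 2 := by gcongr
    _ = ⟪L x w, w⟫ := by field_simp

def relEntropy (η : E → ℝ) (A G : E → E) (u ubar : E) : ℝ :=
  η u - η ubar - ⟪G ubar, A u - A ubar⟫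

theorem sub_le_relEntropy (η : E → ℝ) (A G : E → E) (u ubar : E) :
    η u - ‖η ubar‖ - ‖G ubar‖ * (‖A u‖ + ‖A ubar‖) ≤ relEntropy η A G u ubar := by
  have h₁ := (real_inner_le_norm (G ubar) (A u - A ubar)).trans
    (mul_le_mul_of_nonneg_left (norm_sub_le (A u) (A ubar)) (norm_nonneg _))
  have h₂ := Real.le_norm_self (η ubar)
  rw [relEntropy]
  linarith

variable {A G : E → E} {η : E → ℝ}

theorem eventually_half_le_relEntropy (hη : Continuous η) (hA : Continuous A)
    (hG : Continuous G) (hηtop : Tendsto η (cobounded E) atTop) (hAη : A =o[cobounded E] η)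
    {K : Set E} (hK : IsCompact K) :
    ∀ᶠ u in cobounded E, ∀ ubar ∈ K, η u / 2 ≤ relEntropy η A G u ubar := by
  obtain ⟨bη, hbη, hηK⟩ := hK.exists_pos_forall_norm_le hη.continuousOn
  obtain ⟨bG, hbG, hGK⟩ := hK.exists_pos_forall_norm_le hG.continuousOn
  obtain ⟨bA, hbA, hAK⟩ := hK.exists_pos_forall_norm_le hA.continuousOn
  filter_upwards [hAη.def (c := 1 / (4 * bG)) (by positivity),
    hηtop.eventually_ge_atTop (4 * (bη + bG * bA))] with u hAu hηu ubar hubar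
  rw [Real.norm_of_nonneg ((by positivity : (0 : ℝ) ≤ 4 * (bη + bG * bA)).trans hηu)] at hAu
  have hGA : ‖G ubar‖ * (‖A u‖ + ‖A ubar‖) ≤ bG * (1 / (4 * bG) * η u + bA) := by
    gcongr
    exacts [hGK ubar hubar, hAK ubar hubar]
  have : bG * (1 / (4 * bG) * η u + bA) = η u / 4 + bG * bA := by field_simp
  linarith [sub_le_relEntropy η A G u ubar, hηK ubar hubar]

theorem iteratedFDeriv_two_sub_inner_eq_inner_fderiv
    (hA : ContDiff ℝ 2 A) (hη : ContDiff ℝ 2 η) (hG : Differentiable ℝ G)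
    (hH2 : ∀ x ξ, fderiv ℝ η x ξ = ⟪G x, fderiv ℝ A x ξ⟫) (x ξ : E) :
    iteratedFDeriv ℝ 2 η x ![ξ, ξ] - ⟪G x, iteratedFDeriv ℝ 2 A x ![ξ, ξ]⟫ =
      ⟪fderiv ℝ G x ξ, fderiv ℝ A x ξ⟫ := by
  have hη' := hasFDerivAt_fderiv_apply hη x ξ
  simp only [hH2] at hη'
  have := congrArg (· ξ)
    (hη'.unique ((hG x).hasFDerivAt.inner ℝ (hasFDerivAt_fderiv_apply hA x ξ)))
  simp only [ContinuousLinearMap.comp_apply, ContinuousLinearMap.apply_apply,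
    fderivInnerCLM_apply, ContinuousLinearMap.prod_apply] at this
  simp only [iteratedFDeriv_two_apply, Matrix.cons_val_zero, Matrix.cons_val_one, this]
  ring

section CompleteSpace

variable [CompleteSpace E]

theorem hasGradientAt_comp_invFun (hA : ContDiff ℝ 1 A) (hAbij : Bijective A)
    (hA' : ∀ x, IsUnit (fderiv ℝ A x)) (hη : Differentiable ℝ η)
    (hH2 : ∀ x ξ, fderiv ℝ η x ξ = ⟪G x, fderiv ℝ A x ξ⟫) (y : E) :
    HasGradientAt (η ∘ invFun A) (G (invFun A y)) y := by
  refine ((hη _).hasFDerivAt.comp y (hasFDerivAt_invFun hA hAbij hA' y)).congr_fderiv ?_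
  ext w
  simp [hH2, (hA' _).apply_ringInverse_apply]

theorem exists_pos_eventually_norm_relFlux_le_mul_relEntropy {E' : Type*}
    [NormedAddCommGroup E'] [NormedSpace ℝ E'] {F : E → E'} (hA : ContDiff ℝ 1 A)
    (hA' : ∀ x, IsUnit (fderiv ℝ A x)) (hF : ContDiff ℝ 1 F) (hη : Continuous η)
    (hG : Continuous G) (hηtop : Tendsto η (cobounded E) atTop)
    (hFη : F =O[cobounded E] η) (hAη : A =o[cobounded E] η) {K : Set E} (hK : IsCompact K) :
    ∃ C > 0, ∀ᶠ u in cobounded E, ∀ ubar ∈ K,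
      ‖relFlux A F u ubar‖ ≤ C * relEntropy η A G u ubar := by
  obtain ⟨C, hC, hflux⟩ :=
    exists_pos_eventually_norm_relFlux_le_mul hA hA' hF hηtop hFη hAη.isBigO hK
  refine ⟨2 * C, by positivity, ?_⟩
  filter_upwards [hflux, eventually_half_le_relEntropy hη hA.continuous hG hηtop hAη hK]
    with u hN hD ubar hubar
  linarith [hN ubar hubar, mul_le_mul_of_nonneg_left (hD ubar hubar) hC.le]

end CompleteSpace

section FiniteDimensional

variable [FiniteDimensional ℝ E]

theorem exists_pos_mul_sq_norm_image_sub_le_relEntropy (hA : ContDiff ℝ 1 A)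
    (hAbij : Bijective A) (hA' : ∀ x, IsUnit (fderiv ℝ A x)) (hη : Differentiable ℝ η)
    (hG : ContDiff ℝ 1 G) (hH2 : ∀ x ξ, fderiv ℝ η x ξ = ⟪G x, fderiv ℝ A x ξ⟫)
    (hpos : ∀ x ξ, ξ ≠ 0 → 0 < ⟪fderiv ℝ G x ξ, fderiv ℝ A x ξ⟫) {K : Set E} (hK : IsCompact K) :
    ∃ c > 0, ∀ u ∈ K, ∀ ubar ∈ K, c * ‖A u - A ubar‖ ^ 2 ≤ relEntropy η A G u ubar := by
  have hg := hasFDerivAt_invFun hA hAbij hA'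
  have hgc : Continuous (invFun A) := continuous_iff_continuousAt.2 fun y => (hg y).continuousAt
  set L : E → E →L[ℝ] E := fun x => (fderiv ℝ G x).comp (Ring.inverse (fderiv ℝ A x))
  have hL : Continuous L :=
    (hG.continuous_fderiv one_ne_zero).clm_comp (continuous_ringInverse_fderiv hA hA')
  have hLpos : ∀ x, ∀ w ≠ 0, 0 < ⟪L x w, w⟫ := fun x w hw => by
    have hξ : Ring.inverse (fderiv ℝ A x) w ≠ 0 := fun h => hw <| by
      rw [← (hA' x).apply_ringInverse_apply w, h, map_zero]
    simpa only [L, ContinuousLinearMap.comp_apply, (hA' x).apply_ringInverse_apply] using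
      hpos x _ hξ
  obtain ⟨ρ, hρ⟩ := (hK.image hA.continuous).isBounded.subset_closedBall 0
  obtain ⟨c, hc, hcoer⟩ :=
    ((isCompact_closedBall (0 : E) ρ).image hgc).exists_pos_mul_sq_norm_le_inner
      hL.continuousOn fun x _ => hLpos x
  have hΓ : ∀ y, HasFDerivAt (G ∘ invFun A) (L (invFun A y)) y := fun y =>
    (hG.differentiable one_ne_zero _).hasFDerivAt.comp y (hg y)
  refine ⟨c / 2, by positivity, fun u hu ubar hubar => ?_⟩
  have := half_mul_sq_norm_sub_le_bregman (convex_closedBall 0 ρ)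
    (hasGradientAt_comp_invFun hA hAbij hA' hη hH2)
    (fun V hV W hW => mul_sq_norm_sub_le_inner_sub_of_hasFDerivAt (convex_closedBall 0 ρ) hΓ
      (fun y hy w => hcoer _ (mem_image_of_mem _ hy) w) hV hW)
    (hρ (mem_image_of_mem A hu)) (hρ (mem_image_of_mem A hubar))
  simpa only [relEntropy, comp_apply, leftInverse_invFun hAbij.1 _] using this

theorem exists_pos_mul_sq_norm_sub_le_relEntropy (hA : ContDiff ℝ 1 A)
    (hAbij : Bijective A) (hA' : ∀ x, IsUnit (fderiv ℝ A x)) (hη : Differentiable ℝ η)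
    (hG : ContDiff ℝ 1 G) (hH2 : ∀ x ξ, fderiv ℝ η x ξ = ⟪G x, fderiv ℝ A x ξ⟫)
    (hpos : ∀ x ξ, ξ ≠ 0 → 0 < ⟪fderiv ℝ G x ξ, fderiv ℝ A x ξ⟫) {K : Set E} (hK : IsCompact K) :
    ∃ κ > 0, ∀ u ∈ K, ∀ ubar ∈ K, κ * ‖u - ubar‖ ^ 2 ≤ relEntropy η A G u ubar := by
  obtain ⟨c, hc, hD⟩ :=
    exists_pos_mul_sq_norm_image_sub_le_relEntropy hA hAbij hA' hη hG hH2 hpos hK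
  obtain ⟨ℓ, hℓ, hlip⟩ := exists_norm_sub_le_mul_norm_sub_of_bijective hA hAbij hA' hK
  refine ⟨c / ℓ ^ 2, by positivity, fun u hu ubar hubar => (hD u hu ubar hubar).trans' ?_⟩
  calc c / ℓ ^ 2 * ‖u - ubar‖ ^ 2 ≤ c / ℓ ^ 2 * (ℓ * ‖A u - A ubar‖) ^ 2 := by
        gcongr; exact hlip u hu ubar hubar
    _ = c * ‖A u - A ubar‖ ^ 2 := by field_simp

theorem exists_pos_norm_relFlux_le_mul_relEntropy {E' : Type*} [NormedAddCommGroup E']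
    [NormedSpace ℝ E'] {F : E → E'} (hA : ContDiff ℝ 2 A) (hAbij : Bijective A)
    (hA' : ∀ x, IsUnit (fderiv ℝ A x)) (hF : ContDiff ℝ 2 F) (hη : ContDiff ℝ 1 η)
    (hG : ContDiff ℝ 1 G) (hH2 : ∀ x ξ, fderiv ℝ η x ξ = ⟪G x, fderiv ℝ A x ξ⟫)
    (hpos : ∀ x ξ, ξ ≠ 0 → 0 < ⟪fderiv ℝ G x ξ, fderiv ℝ A x ξ⟫)
    (hηtop : Tendsto η (cobounded E) atTop) (hFη : F =O[cobounded E] η)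
    (hAη : A =o[cobounded E] η) (M : ℝ) :
    ∃ C > 0, ∀ u ubar, ‖ubar‖ ≤ M → ‖relFlux A F u ubar‖ ≤ C * relEntropy η A G u ubar := by
  obtain ⟨C₁, hC₁, hfar⟩ := exists_pos_eventually_norm_relFlux_le_mul_relEntropy
    (hA.of_le one_le_two) hA' (hF.of_le one_le_two) hη.continuous hG.continuous hηtop hFη hAη
    (isCompact_closedBall (0 : E) M)
  obtain ⟨R, -, hR⟩ := hasBasis_cobounded_norm.eventually_iff.1 hfar
  set K := Metric.closedBall (0 : E) (max R M)
  obtain ⟨C₂, hC₂, hnear⟩ := exists_norm_relFlux_le_mul_sq hA hF hA' (isCompact_closedBall 0 _)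
    (convex_closedBall 0 (max R M))
  obtain ⟨κ, hκ, hD⟩ := exists_pos_mul_sq_norm_sub_le_relEntropy (hA.of_le one_le_two) hAbij hA'
    (hη.differentiable one_ne_zero) hG hH2 hpos (isCompact_closedBall (0 : E) (max R M))
  refine ⟨C₁ + C₂ / κ, by positivity, fun u ubar hubar => ?_⟩
  rcases le_or_gt R ‖u‖ with hu | hu
  · have hN := hR hu ubar (mem_closedBall_zero_iff.2 hubar)
    have hD₀ := nonneg_of_mul_nonneg_right ((norm_nonneg _).trans hN) hC₁
    exact hN.trans (mul_le_mul_of_nonneg_right (le_add_of_nonneg_right (by positivity)) hD₀)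
  · have huK : u ∈ K := mem_closedBall_zero_iff.2 (hu.le.trans (le_max_left _ _))
    have hubarK : ubar ∈ K := mem_closedBall_zero_iff.2 (hubar.trans (le_max_right _ _))
    have hN := hnear u huK ubar hubarK
    have hDu := hD u huK ubar hubarK
    have hD₀ : 0 ≤ relEntropy η A G u ubar := (by positivity : 0 ≤ κ * _).trans hDu
    calc ‖relFlux A F u ubar‖ ≤ C₂ / κ * (κ * ‖u - ubar‖ ^ 2) := by
          rwa [← mul_assoc, div_mul_cancel₀ _ hκ.ne']
      _ ≤ C₂ / κ * relEntropy η A G u ubar := by gcongr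
      _ ≤ (C₁ + C₂ / κ) * relEntropy η A G u ubar :=
          mul_le_mul_of_nonneg_right (le_add_of_nonneg_left hC₁.le) hD₀

end FiniteDimensional

end InnerProduct

theorem relative_flux_controlled_by_relative_entropy_general
    (n d : ℕ) (p : ℝ) (hp : 1 < p)
    (A : EuclideanSpace ℝ (Fin n) → EuclideanSpace ℝ (Fin n))
    (F : Fin d → EuclideanSpace ℝ (Fin n) → EuclideanSpace ℝ (Fin n))
    (η : EuclideanSpace ℝ (Fin n) → ℝ)
    (G : EuclideanSpace ℝ (Fin n) → EuclideanSpace ℝ (Fin n))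
    -- smoothness of the constitutive functions
    (hAreg : ContDiff ℝ 2 A) (hFreg : ∀ α, ContDiff ℝ (⊤ : ℕ∞) (F α))
    (hηreg : ContDiff ℝ (⊤ : ℕ∞) η)
    (hGreg : ContDiff ℝ (⊤ : ℕ∞) G)
    -- (H1): A is globally invertible with nonsingular differential
    (hH1 : Function.Bijective A)
    (hH1' : ∀ w, Function.Bijective (fderiv ℝ A w))
    -- (H2): entropy pair with multiplier G
    (hH2η : ∀ w ξ, fderiv ℝ η w ξ = ⟪G w, fderiv ℝ A w ξ⟫)
    -- (H3): ∇²η(u) − G(u)·∇²A(u) is positive definite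
    (hH3 : ∀ w (ξ : EuclideanSpace ℝ (Fin n)), ξ ≠ 0 →
      0 < iteratedFDeriv ℝ 2 η w ![ξ, ξ] - ⟪G w, iteratedFDeriv ℝ 2 A w ![ξ, ξ]⟫)
    -- (A1): growth of the entropy
    (β₁ β₂ B : ℝ) (hβ₁ : 0 < β₁)
    (hA1 : ∀ w : EuclideanSpace ℝ (Fin n),
      β₁ * (‖w‖ ^ p + 1) - B ≤ η w ∧ η w ≤ β₂ * (‖w‖ ^ p + 1))
    -- (A2): |F_α(u)|/η(u) = o(1) as |u| → ∞
    (hA2 : ∀ α, ∀ ε > (0:ℝ), ∃ R₀, ∀ w : EuclideanSpace ℝ (Fin n),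
      R₀ ≤ ‖w‖ → ‖F α w‖ ≤ ε * η w)
    -- (A3): |A(u)|/η(u) = o(1) as |u| → ∞
    (hA3 : ∀ ε > (0:ℝ), ∃ R₀, ∀ w : EuclideanSpace ℝ (Fin n),
      R₀ ≤ ‖w‖ → ‖A w‖ ≤ ε * η w)
    (M : ℝ) :
    ∃ C₃ > (0:ℝ), ∀ (α : Fin d) (u ubar : EuclideanSpace ℝ (Fin n)), ‖ubar‖ ≤ M →
      ‖F α u - F α ubar - (fderiv ℝ (F α) ubar)
          (Ring.inverse (fderiv ℝ A ubar) (A u - A ubar))‖ ≤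
        C₃ * (η u - η ubar - ⟪G ubar, A u - A ubar⟫) := by
  have hA' w : IsUnit (fderiv ℝ A w) := ContinuousLinearMap.isUnit_iff_bijective.2 (hH1' w)
  have hη : ContDiff ℝ 2 η := hηreg.of_le (by norm_cast)
  have hG : ContDiff ℝ 1 G := hGreg.of_le (by norm_cast)
  have hpos x ξ (hξ : ξ ≠ 0) : 0 < ⟪fderiv ℝ G x ξ, fderiv ℝ A x ξ⟫ :=
    iteratedFDeriv_two_sub_inner_eq_inner_fderiv hAreg hη (hG.differentiable one_ne_zero) hH2η x ξ ▸
      hH3 x ξ hξ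
  have hηtop : Tendsto η (cobounded _) atTop :=
    tendsto_atTop_mono (fun w => (hA1 w).1) <| tendsto_atTop_add_const_right _ (-B) <|
      (tendsto_atTop_add_const_right _ 1 <| (tendsto_rpow_atTop (by linarith)).comp
        tendsto_norm_cobounded_atTop).const_mul_atTop hβ₁
  choose C hC hbound using fun α => exists_pos_norm_relFlux_le_mul_relEntropy hAreg hH1 hA'
    ((hFreg α).of_le (by norm_cast)) (hη.of_le one_le_two) hG hH2η hpos hηtop
    (isLittleO_cobounded_of_forall_exists_norm_le (hA2 α)).isBigO
    (isLittleO_cobounded_of_forall_exists_norm_le hA3) M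
  obtain ⟨C₀, hC₀⟩ := (Set.finite_range C).bddAbove
  refine ⟨max C₀ 1, by positivity, fun α u ubar hubar => (hbound α u ubar hubar).trans ?_⟩
  exact mul_le_mul_of_nonneg_right ((hC₀ ⟨α, rfl⟩).trans (le_max_left _ _))
    (nonneg_of_mul_nonneg_right ((norm_nonneg _).trans (hbound α u ubar hubar)) (hC α))

/-- **Lemma A.1, second bound (control of the relative flux by the relative entropy).**
Under hypotheses (H1), (H2), (H3) and the growth assumptions (A1), (A2), (A3),
there exists a constant `C₃` depending on `M` such that for each `α`,
`|F_α(u|ū)| ≤ C₃ η(u|ū)` for all `u ∈ ℝ^n` and all `ū ∈ B_M`, where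
`F_α(u|ū) = F_α(u) − F_α(ū) − ∇F_α(ū) ∇A(ū)⁻¹ (A(u) − A(ū))`. -/
theorem relative_flux_controlled_by_relative_entropy
    (n d : ℕ) (p : ℝ) (hp : 1 < p)
    (A : EuclideanSpace ℝ (Fin n) → EuclideanSpace ℝ (Fin n))
    (F : Fin d → EuclideanSpace ℝ (Fin n) → EuclideanSpace ℝ (Fin n))
    (η : EuclideanSpace ℝ (Fin n) → ℝ)
    (q : Fin d → EuclideanSpace ℝ (Fin n) → ℝ)
    (G : EuclideanSpace ℝ (Fin n) → EuclideanSpace ℝ (Fin n))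
    -- smoothness of the constitutive functions
    (hAreg : ContDiff ℝ 2 A) (hFreg : ∀ α, ContDiff ℝ (⊤ : ℕ∞) (F α))
    (hηreg : ContDiff ℝ (⊤ : ℕ∞) η) (hqreg : ∀ α, ContDiff ℝ (⊤ : ℕ∞) (q α))
    (hGreg : ContDiff ℝ (⊤ : ℕ∞) G)
    -- (H1): A is globally invertible with nonsingular differential
    (hH1 : Function.Bijective A)
    (hH1' : ∀ w, Function.Bijective (fderiv ℝ A w))
    -- (H2): entropy pair with multiplier G
    (hH2η : ∀ w ξ, fderiv ℝ η w ξ = ⟪G w, fderiv ℝ A w ξ⟫)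
    (hH2q : ∀ α w ξ, fderiv ℝ (q α) w ξ = ⟪G w, fderiv ℝ (F α) w ξ⟫)
    -- (H3): ∇²η(u) − G(u)·∇²A(u) is positive definite
    (hH3 : ∀ w (ξ : EuclideanSpace ℝ (Fin n)), ξ ≠ 0 →
      0 < iteratedFDeriv ℝ 2 η w ![ξ, ξ] - ⟪G w, iteratedFDeriv ℝ 2 A w ![ξ, ξ]⟫)
    -- (A1): growth of the entropy
    (β₁ β₂ B : ℝ) (hβ₁ : 0 < β₁) (hβ₂ : 0 < β₂) (hB : 0 < B)
    (hA1 : ∀ w : EuclideanSpace ℝ (Fin n),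
      β₁ * (‖w‖ ^ p + 1) - B ≤ η w ∧ η w ≤ β₂ * (‖w‖ ^ p + 1))
    -- (A2): |F_α(u)|/η(u) = o(1) as |u| → ∞
    (hA2 : ∀ α, ∀ ε > (0:ℝ), ∃ R₀, ∀ w : EuclideanSpace ℝ (Fin n),
      R₀ ≤ ‖w‖ → ‖F α w‖ ≤ ε * η w)
    -- (A3): |A(u)|/η(u) = o(1) as |u| → ∞
    (hA3 : ∀ ε > (0:ℝ), ∃ R₀, ∀ w : EuclideanSpace ℝ (Fin n),
      R₀ ≤ ‖w‖ → ‖A w‖ ≤ ε * η w)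
    (M : ℝ) (hM : 0 < M) :
    ∃ C₃ > (0:ℝ), ∀ (α : Fin d) (u ubar : EuclideanSpace ℝ (Fin n)), ‖ubar‖ ≤ M →
      ‖F α u - F α ubar - (fderiv ℝ (F α) ubar)
          (Ring.inverse (fderiv ℝ A ubar) (A u - A ubar))‖ ≤
        C₃ * (η u - η ubar - ⟪G ubar, A u - A ubar⟫) :=
  relative_flux_controlled_by_relative_entropy_general n d p hp A F η G hAreg hFreg hηreg hGreg hH1
    hH1' hH2η hH3 β₁ β₂ B hβ₁ hA1 hA2 hA3 M
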